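/- Laplace transform of the divided difference of the exponential: for every integer q ≥ 0, every tuple (x_0, …, x_q) of real numbers, every real α, and every real s satisfying s > α x_j for all j = 0, …, q, the function t ↦ e^{-st} · e^{αt[x_0, …, x_q]} is integrable on (0, ∞) and ∫_0^∞ e^{-st} · e^{αt[x_0, …, x_q]} dt = α^q / Π_{j=0}^{q} (s − α x_j). -/

import Mathlib

open scoped BigOperators

/-- Complete homogeneous symmetric polynomial of degree `m` in the entries of the list `l`:
`h_m(x_0, …, x_q) = Σ_{k_0+⋯+k_q = m} x_0^{k_0}⋯x_q^{k_q}` (with `h_0 = 1`). -/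
noncomputable def hsymm (l : List ℝ) (m : ℕ) : ℝ :=
  ∑ k ∈ Finset.Nat.antidiagonalTuple l.length m, ∏ i : Fin l.length, l.get i ^ k i

/-- Divided difference of the exponential `e^{t[x_0, …, x_q]}` over the tuple given by the
list `l` (of length `q+1`), defined by its (absolutely convergent) series
`Σ_{m=0}^∞ (t^{q+m}/(q+m)!) · h_m(x_0, …, x_q)`; by convention it is `0` on the empty tuple. -/
noncomputable def dde (t : ℝ) (l : List ℝ) : ℝ :=
  if l.length = 0 then 0
  else ∑' m : ℕ, t ^ (l.length - 1 + m) / (Nat.factorial (l.length - 1 + m)) * hsymm l m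

/-- The sub-tuple `[x_a, …, x_b]` of the sequence `x`, as a list (empty if `b < a`). -/
def seg (x : ℕ → ℝ) (a b : ℕ) : List ℝ :=
  (List.range (b + 1 - a)).map (fun i => x (a + i))

/-!
Let `c_n(x)` be the coefficient of `t^n/n!` in `e^{t[x]}`. The recursion
`h_{m+1}(y, x) = h_{m+1}(x) + y h_m(y, x)` gives `c_{n+1}(y, x) = c_n(x) + y c_n(y, x)`, i.e.
`f(t) = e^{t[y, x]}` solves `f' = y f + e^{t[x]}` with `f(0) = [x = ()]`. A comparison argument
shows `e^{αt[x]} = O(e^{Mt})` on `t ≥ 0` for every `M > max_j α x_j`, so the Laplace transform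
of a derivative is `s L f - f(0)`. Hence `(s - α y) L(y, x) = α L(x) + [x = ()]`, and the
formula follows by induction on the length of the tuple.
-/

open Finset Real Filter Topology MeasureTheory Set
open scoped Nat

theorem hsymm_zero (l : List ℝ) : hsymm l 0 = 1 := by
  simp [hsymm, Finset.Nat.antidiagonalTuple_zero_right]

theorem hsymm_nil_succ (m : ℕ) : hsymm [] (m + 1) = 0 := by
  simp [hsymm, Finset.Nat.antidiagonalTuple_zero_succ]

theorem hsymm_cons (y : ℝ) (l : List ℝ) (m : ℕ) :
    hsymm (y :: l) m = ∑ p ∈ antidiagonal m, y ^ p.1 * hsymm l p.2 := by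
  simp only [hsymm, List.length_cons, Finset.mul_sum]
  rw [Finset.sum_sigma']
  refine Finset.sum_nbij' (fun k => ⟨(k 0, m - k 0), Fin.tail k⟩) (fun p => Fin.cons p.1.1 p.2)
    ?_ ?_ (fun k _ => Fin.cons_self_tail k) ?_ ?_
  · intro k hk
    simp only [Finset.Nat.mem_antidiagonalTuple, Fin.sum_univ_succ] at hk
    simp only [Finset.mem_sigma, HasAntidiagonal.mem_antidiagonal,
      Finset.Nat.mem_antidiagonalTuple, Fin.tail]
    omega
  · rintro ⟨⟨a, b⟩, k⟩ h
    simp only [Finset.mem_sigma, HasAntidiagonal.mem_antidiagonal,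
      Finset.Nat.mem_antidiagonalTuple] at h
    simp [Finset.Nat.mem_antidiagonalTuple, Fin.sum_cons, h.2, h.1]
  · rintro ⟨⟨a, b⟩, k⟩ h
    simp only [Finset.mem_sigma, HasAntidiagonal.mem_antidiagonal,
      Finset.Nat.mem_antidiagonalTuple] at h
    simp only [Fin.cons_zero, Fin.tail_cons, Sigma.mk.inj_iff, Prod.mk.injEq, heq_eq_eq,
      true_and, and_true]
    omega
  · intro k _
    simp [Fin.prod_univ_succ, Fin.tail]

theorem hsymm_cons_succ (y : ℝ) (l : List ℝ) (m : ℕ) :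
    hsymm (y :: l) (m + 1) = hsymm l (m + 1) + y * hsymm (y :: l) m := by
  rw [hsymm_cons, Finset.Nat.antidiagonal_succ, Finset.sum_cons, Finset.sum_map, hsymm_cons,
    Finset.mul_sum]
  simp [pow_succ, mul_left_comm, mul_comm]

theorem abs_hsymm_le (l : List ℝ) (m : ℕ) : |hsymm l m| ≤ (l.map abs).sum ^ m := by
  induction l generalizing m with
  | nil => cases m <;> simp [hsymm_zero, hsymm_nil_succ]
  | cons y l ih =>
    induction m with
    | zero => simp [hsymm_zero]
    | succ m ihm =>
      have hS : 0 ≤ (l.map abs).sum := List.sum_nonneg (by simp)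
      calc |hsymm (y :: l) (m + 1)|
          ≤ (l.map abs).sum * (l.map abs).sum ^ m + |y| * (|y| + (l.map abs).sum) ^ m := by
            rw [hsymm_cons_succ, ← pow_succ']
            refine (abs_add_le _ _).trans (add_le_add (ih _) ?_)
            rw [abs_mul]
            exact mul_le_mul_of_nonneg_left (by simpa using ihm) (abs_nonneg y)
        _ ≤ (|y| + (l.map abs).sum) ^ (m + 1) := by
            have h := pow_le_pow_left₀ hS (le_add_of_nonneg_left (abs_nonneg y)) m
            rw [pow_succ', add_mul]
            linarith [mul_le_mul_of_nonneg_left h hS]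
        _ = ((y :: l).map abs).sum ^ (m + 1) := by simp

section ExponentialSeries

variable {c : ℕ → ℝ} {K R : ℝ}

theorem summable_mul_pow_div_factorial (hc : ∀ n, |c n| ≤ K * R ^ n) (t : ℝ) :
    Summable fun n => c n * t ^ n / n ! := by
  refine Summable.of_norm_bounded ((Real.summable_pow_div_factorial (R * |t|)).mul_left K)
    fun n => ?_
  rw [Real.norm_eq_abs, abs_div, abs_mul, abs_pow, Nat.abs_cast, mul_pow, ← mul_div_assoc,
    ← mul_assoc, mul_div_assoc, mul_div_assoc]
  exact mul_le_mul_of_nonneg_right (hc n) (by positivity)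

theorem hasDerivAt_tsum_mul_pow_div_factorial (hc : ∀ n, |c n| ≤ K * R ^ n) (t : ℝ) :
    HasDerivAt (fun t => ∑' n, c n * t ^ n / n !) (∑' n, c (n + 1) * t ^ n / n !) t := by
  have hshift : (fun t => ∑' n, c n * t ^ n / n !) =
      fun t => c 0 + ∑' n, c (n + 1) * t ^ (n + 1) / (n + 1)! := by
    funext t
    simpa using (summable_mul_pow_div_factorial hc t).tsum_eq_zero_add
  rw [hshift]
  refine HasDerivAt.const_add _ ?_
  set r := |t| + 1
  have ht : t ∈ Metric.ball (0 : ℝ) r := by simp [r]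
  refine hasDerivAt_tsum_of_isPreconnected (t := Metric.ball (0 : ℝ) r) (y₀ := t)
    (g := fun n z => c (n + 1) * z ^ (n + 1) / (n + 1)!) (g' := fun n z => c (n + 1) * z ^ n / n !)
    (u := fun n => K * R * ((R * r) ^ n / n !))
    ((Real.summable_pow_div_factorial _).mul_left (K * R))
    Metric.isOpen_ball (convex_ball 0 r).isPreconnected (fun n z _ => ?_) (fun n z hz => ?_)
    ht ?_ ht
  · have := ((hasDerivAt_pow (n + 1) z).const_mul (c (n + 1))).div_const ((n + 1)! : ℝ)
    refine this.congr_deriv ?_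
    rw [Nat.factorial_succ, Nat.add_sub_cancel]
    push_cast
    field_simp
  · have hz : |z| ≤ r := by simpa using (Metric.mem_ball.mp hz).le
    rw [Real.norm_eq_abs, abs_div, abs_mul, abs_pow, Nat.abs_cast, mul_div_assoc]
    calc |c (n + 1)| * (|z| ^ n / n !) ≤ K * R ^ (n + 1) * (r ^ n / n !) :=
          mul_le_mul (hc _) (by gcongr) (by positivity) ((abs_nonneg _).trans (hc _))
      _ = K * R * ((R * r) ^ n / n !) := by ring_nf
  · exact (summable_nat_add_iff 1).mpr (summable_mul_pow_div_factorial hc t)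

end ExponentialSeries

/-- The coefficient of `t ^ n / n!` in `dde t l`; it vanishes for `l = []` because
`hsymm [] (n + 1) = 0`. -/
noncomputable def ddeCoeff (l : List ℝ) (n : ℕ) : ℝ :=
  if l.length ≤ n + 1 then hsymm l (n + 1 - l.length) else 0

theorem abs_ddeCoeff_le (l : List ℝ) (n : ℕ) :
    |ddeCoeff l n| ≤ max 1 (l.map abs).sum * max 1 (l.map abs).sum ^ n := by
  have hS : 0 ≤ (l.map abs).sum := List.sum_nonneg (by simp)
  rw [← pow_succ']
  unfold ddeCoeff
  split_ifs
  · exact (abs_hsymm_le l _).trans ((pow_le_pow_left₀ hS (le_max_right _ _) _).trans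
      (pow_le_pow_right₀ (le_max_left _ _) (by omega)))
  · simp

theorem ddeCoeff_cons_succ (y : ℝ) (l : List ℝ) (n : ℕ) :
    ddeCoeff (y :: l) (n + 1) = ddeCoeff l n + y * ddeCoeff (y :: l) n := by
  simp only [ddeCoeff, List.length_cons]
  obtain h | h | h : l.length ≤ n ∨ l.length = n + 1 ∨ n + 1 < l.length := by omega
  · rw [if_pos (by omega), if_pos (by omega), if_pos (by omega),
      show n + 1 + 1 - (l.length + 1) = n - l.length + 1 by omega,
      show n + 1 - l.length = n - l.length + 1 by omega,
      show n + 1 - (l.length + 1) = n - l.length by omega, hsymm_cons_succ]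
  · rw [if_pos (by omega), if_pos (by omega), if_neg (by omega), h]
    simp [hsymm_zero]
  · rw [if_neg (by omega), if_neg (by omega), if_neg (by omega)]
    simp

theorem dde_eq_tsum_ddeCoeff (t : ℝ) (l : List ℝ) :
    dde t l = ∑' n, ddeCoeff l n * t ^ n / n ! := by
  cases l with
  | nil => simp [dde, ddeCoeff, hsymm_nil_succ]
  | cons y l =>
    rw [← (add_right_injective l.length).tsum_eq]
    · simp [dde, ddeCoeff, mul_comm, mul_div_assoc]
    · intro n hn
      rw [Function.mem_support, ddeCoeff, List.length_cons] at hn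
      exact ⟨n - l.length, by split_ifs at hn <;> simp_all⟩

theorem dde_zero (l : List ℝ) : dde 0 l = ddeCoeff l 0 := by
  rw [dde_eq_tsum_ddeCoeff, tsum_eq_single 0 fun n hn => by simp [hn]]
  simp

theorem continuous_dde (l : List ℝ) : Continuous fun t => dde t l := by
  simp_rw [dde_eq_tsum_ddeCoeff]
  exact continuous_iff_continuousAt.mpr fun t =>
    (hasDerivAt_tsum_mul_pow_div_factorial (abs_ddeCoeff_le l) t).continuousAt

theorem hasDerivAt_dde_cons (y : ℝ) (l : List ℝ) (t : ℝ) :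
    HasDerivAt (fun t => dde t (y :: l)) (y * dde t (y :: l) + dde t l) t := by
  have hsum (l : List ℝ) := summable_mul_pow_div_factorial (abs_ddeCoeff_le l) t
  simp_rw [dde_eq_tsum_ddeCoeff]
  convert hasDerivAt_tsum_mul_pow_div_factorial (abs_ddeCoeff_le (y :: l)) t using 1
  have hterm (n : ℕ) : ddeCoeff (y :: l) (n + 1) * t ^ n / n ! =
      ddeCoeff l n * t ^ n / n ! + y * (ddeCoeff (y :: l) n * t ^ n / n !) := by
    rw [ddeCoeff_cons_succ]
    ring
  rw [tsum_congr hterm, (hsum l).tsum_add ((hsum (y :: l)).mul_left y), tsum_mul_left, add_comm]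

theorem hasDerivAt_dde_mul_cons (α y : ℝ) (l : List ℝ) (t : ℝ) :
    HasDerivAt (fun t => dde (α * t) (y :: l))
      (α * y * dde (α * t) (y :: l) + α * dde (α * t) l) t := by
  have := (hasDerivAt_dde_cons y l (α * t)).comp t ((hasDerivAt_id t).const_mul α)
  exact this.congr_deriv (by ring)

theorem abs_le_of_hasDerivAt_eq_mul_add {f g : ℝ → ℝ} {a M C : ℝ}
    (hf : ∀ t, HasDerivAt f (a * f t + g t) t) (ha : a < M)
    (hg : ∀ t, 0 ≤ t → |g t| ≤ C * exp (M * t)) {t : ℝ} (ht : 0 ≤ t) :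
    |f t| ≤ (C / (M - a) + |f 0|) * exp (M * t) := by
  have hMa : 0 < M - a := sub_pos.mpr ha
  have hC : 0 ≤ C := by simpa using (abs_nonneg _).trans (hg 0 le_rfl)
  set K := C / (M - a) + |f 0|
  -- Compare `exp (-a t) f t`, whose derivative is `exp (-a t) g t`, with `K exp ((M - a) t)`.
  have hφ (x : ℝ) : HasDerivAt (fun x => exp (-(a * x)) * f x) (exp (-(a * x)) * g x) x := by
    have he := ((hasDerivAt_id x).const_mul a).neg.exp
    exact (he.mul (hf x)).congr_deriv (by simp; ring)
  have hB (x : ℝ) :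
      HasDerivAt (fun x => K * exp ((M - a) * x)) (K * ((M - a) * exp ((M - a) * x))) x := by
    have := (((hasDerivAt_id x).const_mul (M - a)).exp).const_mul K
    exact this.congr_deriv (by simp only [id]; ring)
  have hbound := image_norm_le_of_norm_deriv_right_le_deriv_boundary
    (fun x _ => (hφ x).continuousAt.continuousWithinAt) (fun x _ => (hφ x).hasDerivWithinAt)
    (by simp [K, div_nonneg hC hMa.le]) hB (fun x hx => ?_) ⟨ht, le_rfl⟩
  · have hexp : exp (M * t) = exp (a * t) * exp ((M - a) * t) := by rw [← exp_add]; ring_nf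
    have hft : f t = exp (a * t) * (exp (-(a * t)) * f t) := by
      rw [← mul_assoc, ← exp_add]; simp
    rw [hft, abs_mul, abs_exp, hexp, mul_left_comm]
    exact mul_le_mul_of_nonneg_left (by simpa using hbound) (exp_pos _).le
  · rw [Real.norm_eq_abs, abs_mul, abs_exp]
    calc exp (-(a * x)) * |g x| ≤ exp (-(a * x)) * (C * exp (M * x)) :=
          mul_le_mul_of_nonneg_left (hg x hx.1) (exp_pos _).le
      _ = C * exp ((M - a) * x) := by rw [mul_left_comm, ← exp_add]; ring_nf
      _ ≤ K * ((M - a) * exp ((M - a) * x)) := by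
          rw [← mul_assoc]
          refine mul_le_mul_of_nonneg_right ?_ (exp_pos _).le
          simp only [K, add_mul, div_mul_cancel₀ C hMa.ne']
          linarith [mul_nonneg (abs_nonneg (f 0)) hMa.le]

theorem abs_dde_mul_le (α : ℝ) {M : ℝ} : ∀ l : List ℝ, (∀ z ∈ l, α * z < M) →
    ∃ C, ∀ t, 0 ≤ t → |dde (α * t) l| ≤ C * exp (M * t)
  | [], _ => ⟨0, fun t _ => by simp [dde]⟩
  | y :: l, hM => by
    obtain ⟨C, hC⟩ := abs_dde_mul_le α l fun z hz => hM z (List.mem_cons_of_mem y hz)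
    refine ⟨_, fun t ht => abs_le_of_hasDerivAt_eq_mul_add (hasDerivAt_dde_mul_cons α y l)
      (hM y List.mem_cons_self) (C := |α| * C) (fun t ht => ?_) ht⟩
    rw [abs_mul, mul_assoc]
    exact mul_le_mul_of_nonneg_left (hC t ht) (abs_nonneg α)

theorem exists_lt_forall_mul_lt {α s : ℝ} {l : List ℝ} (hs : ∀ z ∈ l, α * z < s) :
    ∃ M < s, ∀ z ∈ l, α * z < M := by
  have hev : ∀ᶠ M in 𝓝[<] s, ∀ z ∈ {z | z ∈ l}, α * z < M :=
    (Filter.eventually_all_finite l.finite_toSet).2 fun z hz =>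
      nhdsWithin_le_nhds (eventually_gt_nhds (hs z hz))
  obtain ⟨M, hM, hMs⟩ := (hev.and self_mem_nhdsWithin).exists
  exact ⟨M, hMs, hM⟩

section ExponentialDecay

variable {f : ℝ → ℝ} {s M C : ℝ}

theorem abs_exp_neg_mul_mul_le (hb : ∀ t, 0 ≤ t → |f t| ≤ C * exp (M * t)) {t : ℝ}
    (ht : 0 ≤ t) :
    |exp (-(s * t)) * f t| ≤ C * exp (-(s - M) * t) := by
  rw [abs_mul, abs_exp]
  calc exp (-(s * t)) * |f t| ≤ exp (-(s * t)) * (C * exp (M * t)) :=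
        mul_le_mul_of_nonneg_left (hb t ht) (exp_pos _).le
    _ = C * exp (-(s - M) * t) := by rw [mul_left_comm, ← exp_add]; ring_nf

theorem integrableOn_exp_neg_mul_mul_of_abs_le (hf : Continuous f) (hM : M < s)
    (hb : ∀ t, 0 ≤ t → |f t| ≤ C * exp (M * t)) :
    IntegrableOn (fun t => exp (-(s * t)) * f t) (Ioi 0) := by
  refine ((exp_neg_integrableOn_Ioi 0 (sub_pos.mpr hM)).const_mul C).mono' ?_ ?_
  · exact ((continuous_exp.comp (continuous_const.mul continuous_id).neg).mul
      hf).aestronglyMeasurable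
  · exact (ae_restrict_iff' measurableSet_Ioi).mpr (Filter.Eventually.of_forall fun t ht =>
      abs_exp_neg_mul_mul_le hb (le_of_lt ht))

theorem tendsto_exp_neg_mul_mul_of_abs_le (hM : M < s)
    (hb : ∀ t, 0 ≤ t → |f t| ≤ C * exp (M * t)) :
    Tendsto (fun t => exp (-(s * t)) * f t) atTop (𝓝 0) := by
  have hdecay : Tendsto (fun t => C * exp (-(s - M) * t)) atTop (𝓝 0) := by
    simpa using (tendsto_exp_atBot.comp
      (tendsto_id.const_mul_atTop_of_neg (neg_lt_zero.mpr (sub_pos.mpr hM)))).const_mul C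
  exact squeeze_zero_norm' ((eventually_ge_atTop 0).mono fun t ht => abs_exp_neg_mul_mul_le hb ht)
    hdecay

theorem integral_Ioi_exp_neg_mul_mul_deriv {f' : ℝ → ℝ}
    (hf : ∀ t ∈ Set.Ici 0, HasDerivAt f (f' t) t)
    (hint : IntegrableOn (fun t => exp (-(s * t)) * f t) (Ioi 0))
    (hint' : IntegrableOn (fun t => exp (-(s * t)) * f' t) (Ioi 0))
    (hlim : Tendsto (fun t => exp (-(s * t)) * f t) atTop (𝓝 0)) :
    ∫ t in Ioi 0, exp (-(s * t)) * f' t = s * (∫ t in Ioi 0, exp (-(s * t)) * f t) - f 0 := by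
  have hF (t : ℝ) (ht : t ∈ Set.Ici 0) : HasDerivAt (fun t => exp (-(s * t)) * f t)
      (-s * (exp (-(s * t)) * f t) + exp (-(s * t)) * f' t) t := by
    have he := ((hasDerivAt_id' t).const_mul s).neg.exp
    exact (he.mul (hf t ht)).congr_deriv (by simp only [Pi.neg_apply]; ring)
  have h := integral_Ioi_of_hasDerivAt_of_tendsto' hF
    (f' := fun t => -s * (exp (-(s * t)) * f t) + exp (-(s * t)) * f' t)
    ((hint.const_mul (-s)).add hint') hlim
  rw [integral_add (hint.const_mul _) hint', integral_const_mul, mul_zero, neg_zero, exp_zero,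
    one_mul] at h
  linear_combination h

end ExponentialDecay

theorem integrableOn_exp_neg_mul_mul_dde {α s : ℝ} {l : List ℝ}
    (hs : ∀ z ∈ l, α * z < s) :
    IntegrableOn (fun t => exp (-(s * t)) * dde (α * t) l) (Ioi 0) := by
  obtain ⟨M, hMs, hM⟩ := exists_lt_forall_mul_lt hs
  obtain ⟨C, hC⟩ := abs_dde_mul_le α l hM
  exact integrableOn_exp_neg_mul_mul_of_abs_le
    ((continuous_dde l).comp (continuous_const.mul continuous_id)) hMs hC

theorem tendsto_exp_neg_mul_mul_dde {α s : ℝ} {l : List ℝ} (hs : ∀ z ∈ l, α * z < s) :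
    Tendsto (fun t => exp (-(s * t)) * dde (α * t) l) atTop (𝓝 0) := by
  obtain ⟨M, hMs, hM⟩ := exists_lt_forall_mul_lt hs
  obtain ⟨C, hC⟩ := abs_dde_mul_le α l hM
  exact tendsto_exp_neg_mul_mul_of_abs_le hMs hC

theorem sub_mul_integral_exp_neg_mul_dde_cons {α s y : ℝ} {l : List ℝ}
    (hs : ∀ z ∈ y :: l, α * z < s) :
    (s - α * y) * ∫ t in Ioi 0, exp (-(s * t)) * dde (α * t) (y :: l) =
      α * (∫ t in Ioi 0, exp (-(s * t)) * dde (α * t) l) + dde 0 (y :: l) := by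
  have hl : ∀ z ∈ l, α * z < s := fun z hz => hs z (List.mem_cons_of_mem y hz)
  have hint := integrableOn_exp_neg_mul_mul_dde hs
  have hint' := integrableOn_exp_neg_mul_mul_dde hl
  have hsplit : (fun t => exp (-(s * t)) * (α * y * dde (α * t) (y :: l) + α * dde (α * t) l)) =
      fun t => α * y * (exp (-(s * t)) * dde (α * t) (y :: l)) +
        α * (exp (-(s * t)) * dde (α * t) l) := by
    funext t
    ring
  have h := integral_Ioi_exp_neg_mul_mul_deriv (fun t _ => hasDerivAt_dde_mul_cons α y l t) hint
    (by rw [hsplit]; exact (hint.const_mul _).add (hint'.const_mul _))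
    (tendsto_exp_neg_mul_mul_dde hs)
  rw [hsplit, integral_add (hint.const_mul _) (hint'.const_mul _), integral_const_mul,
    integral_const_mul, mul_zero] at h
  linear_combination -h

theorem integral_exp_neg_mul_dde_cons {α s : ℝ} (y : ℝ) (l : List ℝ)
    (hs : ∀ z ∈ y :: l, α * z < s) :
    ∫ t in Ioi 0, exp (-(s * t)) * dde (α * t) (y :: l) =
      α ^ l.length / ((y :: l).map fun z => s - α * z).prod := by
  have hy : 0 < s - α * y := sub_pos.mpr (hs y List.mem_cons_self)
  rw [List.map_cons, List.prod_cons, mul_comm (s - α * y), ← div_div, eq_div_iff hy.ne',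
    mul_comm, sub_mul_integral_exp_neg_mul_dde_cons hs]
  cases l with
  | nil =>
    rw [dde_zero]
    simp [dde, ddeCoeff, hsymm_zero]
  | cons z l =>
    rw [integral_exp_neg_mul_dde_cons z l fun w hw => hs w (List.mem_cons_of_mem y hw)]
    simp [dde_zero, ddeCoeff, pow_succ]
    ring

open MeasureTheory in
/-- **Laplace transform of the DDE**: for every `q ≥ 0`, tuple `(x_0, …, x_q)`, real `α`, and
real `s` with `s > α x_j` for all `j`, the map `t ↦ e^{-st} e^{αt[x_0,…,x_q]}` is integrable on
`(0, ∞)` and `∫_0^∞ e^{-st} e^{αt[x_0,…,x_q]} dt = α^q / Π_{j=0}^q (s − α x_j)`. -/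
theorem dde_laplace (q : ℕ) (x : ℕ → ℝ) (α s : ℝ) (hs : ∀ j ≤ q, α * x j < s) :
    IntegrableOn (fun t : ℝ => Real.exp (-(s * t)) * dde (α * t) (seg x 0 q)) (Set.Ioi 0)
      ∧ ∫ t in Set.Ioi (0:ℝ), Real.exp (-(s * t)) * dde (α * t) (seg x 0 q)
          = α ^ q / ∏ j ∈ Finset.range (q + 1), (s - α * x j) := by
  have hseg : seg x 0 q = x 0 :: (List.range q).map (fun i => x (i + 1)) := by
    simp [seg, List.range_succ_eq_map]
  have hs' : ∀ z ∈ seg x 0 q, α * z < s := by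
    simp only [seg, List.mem_map, List.mem_range]
    rintro _ ⟨j, hj, rfl⟩
    exact hs _ (by omega)
  refine ⟨integrableOn_exp_neg_mul_mul_dde hs', ?_⟩
  rw [hseg] at hs' ⊢
  rw [integral_exp_neg_mul_dde_cons _ _ hs', ← hseg, Finset.prod_eq_multiset_prod,
    Finset.range_val, Multiset.range, Multiset.map_coe, Multiset.prod_coe]
  simp [seg, Function.comp_def]
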